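/- Let (Z_n) be a Galton-Watson process with Z_0 = 1, offspring minimum μ ≥ 2 (i.e. p_j = 0 for j < μ and p_μ > 0). Then P(Z_n = μ^n + 1) = p_μ^{-1} p_{μ+1} μ^{n-1} P(Z_n = μ^n) for all n ≥ 1. -/

import Mathlib

/-!
Almost surely every individual has at least `μ` children, so `Z n ≥ μ ^ n`, with equality
exactly when all individuals of the first `n` generations had `μ` children. Since `μ ≥ 2`, an
excess of one in generation `n + 1` cannot come from an excess in generation `n`
(it would be multiplied by at least `μ`), so `Z (n + 1) = μ ^ (n + 1) + 1` means: minimal growth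
up to generation `n`, then exactly one of the `μ ^ n` individuals of generation `n` has `μ + 1`
children. These are `μ ^ n` disjoint configurations, and by independence each has probability
`p (μ + 1) / p μ` times that of the all-`μ` configuration.
-/

open MeasureTheory ProbabilityTheory Finset Function

section UpdateConst

variable {α : Type*} {s : Finset α} {x : α → ℕ} {μ : ℕ}

lemma sum_update_const [DecidableEq α] {j : α} (hj : j ∈ s) :
    ∑ i ∈ s, update (fun _ => μ) j (μ + 1) i = #s * μ + 1 := by
  obtain ⟨k, hk⟩ : ∃ k, #s = k + 1 := Nat.exists_eq_succ_of_ne_zero (card_ne_zero_of_mem hj)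
  rw [sum_update_of_mem hj, sum_const, card_sdiff_of_subset (singleton_subset_iff.2 hj),
    card_singleton, hk, Nat.add_sub_cancel, smul_eq_mul]
  ring

lemma sum_eq_card_mul_iff (hx : ∀ i ∈ s, μ ≤ x i) :
    ∑ i ∈ s, x i = #s * μ ↔ ∀ i ∈ s, x i = μ := by
  rw [← smul_eq_mul, ← sum_const, eq_comm, sum_eq_sum_iff_of_le hx]
  exact forall₂_congr fun _ _ => eq_comm

lemma sum_eq_card_mul_add_one_iff [DecidableEq α] (hx : ∀ i ∈ s, μ ≤ x i) :
    ∑ i ∈ s, x i = #s * μ + 1 ↔ ∃ j ∈ s, ∀ i ∈ s, x i = update (fun _ => μ) j (μ + 1) i := by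
  refine ⟨fun hsum => ?_, fun ⟨j, hj, hxj⟩ => by rw [sum_congr rfl hxj, sum_update_const hj]⟩
  obtain ⟨j, hj, hxj⟩ : ∃ j ∈ s, x j ≠ μ := by
    by_contra! hall
    rw [(sum_eq_card_mul_iff hx).2 hall] at hsum
    omega
  have hle : ∀ i ∈ s, update (fun _ => μ) j (μ + 1) i ≤ x i := fun i hi => by
    rcases eq_or_ne i j with rfl | hij
    · simpa using (hx i hi).lt_of_ne' hxj
    · simpa [hij] using hx i hi
  refine ⟨j, hj, fun i hi => ((sum_eq_sum_iff_of_le hle).1 ?_ i hi).symm⟩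
  rw [hsum, sum_update_const hj]

lemma prod_update_const_mul {α M : Type*} [DecidableEq α] [CommMonoid M] {s : Finset α} {i : α}
    (hi : i ∈ s) (g : ℕ → M) (a b : ℕ) :
    (∏ c ∈ s, g (update (fun _ => a) i b c)) * g a = g b * g a ^ #s := by
  rw [← mul_prod_erase s _ hi, update_self,
    prod_congr rfl fun c hc => by rw [update_of_ne (ne_of_mem_erase hc)], prod_const,
    card_erase_of_mem hi, mul_assoc, ← pow_succ, Nat.sub_add_cancel (card_pos.2 ⟨i, hi⟩)]

end UpdateConst

/-- The individuals `(k, i)` of the first `n` generations when everybody has exactly `μ`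
children. -/
def regularTreeNodes (μ n : ℕ) : Finset (ℕ × ℕ) :=
  (range n).biUnion fun k => (range (μ ^ k)).image (k, ·)

lemma mem_regularTreeNodes {μ n : ℕ} {c : ℕ × ℕ} :
    c ∈ regularTreeNodes μ n ↔ c.1 < n ∧ c.2 < μ ^ c.1 := by
  obtain ⟨k, i⟩ := c
  simp [regularTreeNodes]

lemma forall_mem_regularTreeNodes_succ {μ n : ℕ} {q : ℕ × ℕ → Prop} :
    (∀ c ∈ regularTreeNodes μ (n + 1), q c) ↔
      (∀ c ∈ regularTreeNodes μ n, q c) ∧ ∀ i < μ ^ n, q (n, i) := by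
  simp only [mem_regularTreeNodes]
  constructor
  · exact fun h => ⟨fun c hc => h c ⟨hc.1.trans n.lt_succ_self, hc.2⟩,
      fun i hi => h (n, i) ⟨n.lt_succ_self, hi⟩⟩
  · rintro ⟨hold, hnew⟩ ⟨k, i⟩ ⟨hk, hi⟩
    rcases Nat.lt_succ_iff_lt_or_eq.1 hk with hk | rfl
    exacts [hold _ ⟨hk, hi⟩, hnew i hi]

section MinimalGrowth

variable {μ : ℕ} {x : ℕ × ℕ → ℕ} {z : ℕ → ℕ}

lemma mul_le_of_le_offspring (hz : ∀ n, z (n + 1) = ∑ i ∈ range (z n), x (n, i))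
    (hx : ∀ c, μ ≤ x c) (n : ℕ) : z n * μ ≤ z (n + 1) := by
  simpa [hz] using card_nsmul_le_sum (range (z n)) (fun i => x (n, i)) μ fun i _ => hx (n, i)

lemma pow_le_of_le_offspring (hz0 : z 0 = 1) (hz : ∀ n, z (n + 1) = ∑ i ∈ range (z n), x (n, i))
    (hx : ∀ c, μ ≤ x c) (n : ℕ) : μ ^ n ≤ z n := by
  induction n with
  | zero => simp [hz0]
  | succ n ih => exact (Nat.mul_le_mul_right μ ih).trans (mul_le_of_le_offspring hz hx n)

lemma eq_pow_succ_iff (hμ : 0 < μ) (hz0 : z 0 = 1)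
    (hz : ∀ n, z (n + 1) = ∑ i ∈ range (z n), x (n, i)) (hx : ∀ c, μ ≤ x c) (n : ℕ) :
    z (n + 1) = μ ^ (n + 1) ↔ z n = μ ^ n ∧ ∀ i < μ ^ n, x (n, i) = μ := by
  have hrow : ∑ i ∈ range (μ ^ n), x (n, i) = μ ^ n * μ ↔ ∀ i < μ ^ n, x (n, i) = μ := by
    simpa using sum_eq_card_mul_iff (s := range (μ ^ n)) fun i _ => hx (n, i)
  rw [pow_succ]
  constructor
  · intro h
    have hzn : z n = μ ^ n := by
      refine (pow_le_of_le_offspring hz0 hz hx n).antisymm' ?_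
      exact Nat.le_of_mul_le_mul_right (h ▸ mul_le_of_le_offspring hz hx n) hμ
    exact ⟨hzn, hrow.1 (by rwa [hz, hzn] at h)⟩
  · rintro ⟨hzn, hrow'⟩
    rw [hz, hzn, hrow.2 hrow']

lemma eq_pow_succ_add_one_iff (hμ : 2 ≤ μ) (hz0 : z 0 = 1)
    (hz : ∀ n, z (n + 1) = ∑ i ∈ range (z n), x (n, i)) (hx : ∀ c, μ ≤ x c) (n : ℕ) :
    z (n + 1) = μ ^ (n + 1) + 1 ↔
      z n = μ ^ n ∧ ∃ j < μ ^ n, ∀ i < μ ^ n, x (n, i) = update (fun _ => μ) j (μ + 1) i := by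
  have hrow : ∑ i ∈ range (μ ^ n), x (n, i) = μ ^ n * μ + 1 ↔
      ∃ j < μ ^ n, ∀ i < μ ^ n, x (n, i) = update (fun _ => μ) j (μ + 1) i := by
    simpa using sum_eq_card_mul_add_one_iff (s := range (μ ^ n)) fun i _ => hx (n, i)
  rw [pow_succ]
  constructor
  · intro h
    have hzn : z n = μ ^ n := by
      have hle := h ▸ mul_le_of_le_offspring hz hx n
      have hge := pow_le_of_le_offspring hz0 hz hx n
      -- otherwise `z (n + 1) ≥ (μ ^ n + 1) * μ ≥ μ ^ (n + 1) + 2`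
      by_contra hne
      have : (μ ^ n + 1) * μ ≤ z n * μ := Nat.mul_le_mul_right μ (by omega)
      nlinarith
    exact ⟨hzn, hrow.1 (by rwa [hz, hzn] at h)⟩
  · rintro ⟨hzn, hrow'⟩
    rw [hz, hzn, hrow.2 hrow']

lemma eq_pow_iff_forall_regularTreeNodes (hμ : 0 < μ) (hz0 : z 0 = 1)
    (hz : ∀ n, z (n + 1) = ∑ i ∈ range (z n), x (n, i)) (hx : ∀ c, μ ≤ x c) (n : ℕ) :
    z n = μ ^ n ↔ ∀ c ∈ regularTreeNodes μ n, x c = μ := by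
  induction n with
  | zero => simp [hz0, regularTreeNodes]
  | succ n ih => rw [eq_pow_succ_iff hμ hz0 hz hx, ih, forall_mem_regularTreeNodes_succ]

lemma eq_pow_succ_add_one_iff_forall_regularTreeNodes (hμ : 2 ≤ μ) (hz0 : z 0 = 1)
    (hz : ∀ n, z (n + 1) = ∑ i ∈ range (z n), x (n, i)) (hx : ∀ c, μ ≤ x c) (n : ℕ) :
    z (n + 1) = μ ^ (n + 1) + 1 ↔ ∃ j < μ ^ n,
      ∀ c ∈ regularTreeNodes μ (n + 1), x c = update (fun _ => μ) (n, j) (μ + 1) c := by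
  rw [eq_pow_succ_add_one_iff hμ hz0 hz hx, eq_pow_iff_forall_regularTreeNodes (by omega) hz0 hz hx]
  simp only [forall_mem_regularTreeNodes_succ, ← exists_and_left]
  refine exists_congr fun j => ?_
  have hold : (∀ c ∈ regularTreeNodes μ n, x c = update (fun _ => μ) (n, j) (μ + 1) c) ↔
      ∀ c ∈ regularTreeNodes μ n, x c = μ := forall₂_congr fun c hc => by
    rw [update_of_ne (by rintro rfl; simp [mem_regularTreeNodes] at hc)]
  have hnew : ∀ i, update (fun _ => μ) (n, j) (μ + 1) (n, i) = update (fun _ => μ) j (μ + 1) i :=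
    fun i => by simp [update_apply]
  simp only [hold, hnew]
  tauto

end MinimalGrowth

section Events

variable {Ω ι β : Type*}

lemma disjoint_setOf_forall_mem_eq {ξ : ι → Ω → β} {S : Finset ι} {f g : ι → β} {c : ι}
    (hc : c ∈ S) (hfg : f c ≠ g c) :
    Disjoint {ω | ∀ c ∈ S, ξ c ω = f c} {ω | ∀ c ∈ S, ξ c ω = g c} :=
  Set.disjoint_left.2 fun _ hf hg => hfg ((hf c hc).symm.trans (hg c hc))

variable [MeasurableSpace Ω] {P : Measure Ω}

lemma ae_le_of_measure_eq_zero {X : Ω → ℕ} {μ : ℕ} (h : ∀ j < μ, P {ω | X ω = j} = 0) :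
    ∀ᵐ ω ∂P, μ ≤ X ω := by
  rw [ae_iff]
  refine measure_mono_null (fun ω hω => ?_)
    ((measure_biUnion_null_iff (Set.Iio μ).to_countable).2 h)
  exact Set.mem_biUnion (Set.mem_Iio.2 (not_le.1 hω)) rfl

variable [MeasurableSpace β] [MeasurableSingletonClass β] {ξ : ι → Ω → β}

lemma measurableSet_forall_mem_eq (hξ : ∀ c, Measurable (ξ c)) (S : Finset ι) (f : ι → β) :
    MeasurableSet {ω | ∀ c ∈ S, ξ c ω = f c} := by
  simp only [Set.ofPred_forall]
  exact S.measurableSet_biInter fun c _ => hξ c (measurableSet_singleton (f c))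

lemma ProbabilityTheory.iIndepFun.measureReal_forall_mem_eq (hξ : iIndepFun ξ P) (S : Finset ι)
    (f : ι → β) :
    P.real {ω | ∀ c ∈ S, ξ c ω = f c} = ∏ c ∈ S, P.real {ω | ξ c ω = f c} := by
  simp only [measureReal_def, Set.ofPred_forall, ← ENNReal.toReal_prod]
  exact congrArg ENNReal.toReal
    (hξ.meas_biInter fun c _ => ⟨{f c}, measurableSet_singleton (f c), rfl⟩)

end Events

section GaltonWatson

variable {Ω : Type*} [MeasurableSpace Ω] {P : Measure Ω} {μ : ℕ} {ξ : ℕ × ℕ → Ω → ℕ}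
  {Z : ℕ → Ω → ℕ}

lemma measureReal_eq_pow (hμ : 0 < μ) (hZ0 : ∀ ω, Z 0 ω = 1)
    (hZ : ∀ n ω, Z (n + 1) ω = ∑ i ∈ range (Z n ω), ξ (n, i) ω) (hx : ∀ᵐ ω ∂P, ∀ c, μ ≤ ξ c ω)
    (n : ℕ) :
    P.real {ω | Z n ω = μ ^ n} = P.real {ω | ∀ c ∈ regularTreeNodes μ n, ξ c ω = μ} := by
  refine measureReal_congr ?_
  filter_upwards [hx] with ω hω
  exact propext (eq_pow_iff_forall_regularTreeNodes (z := (Z · ω)) hμ (hZ0 ω) (hZ · ω) hω n)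

lemma measureReal_eq_pow_succ_add_one [IsFiniteMeasure P] (hμ : 2 ≤ μ) (hZ0 : ∀ ω, Z 0 ω = 1)
    (hZ : ∀ n ω, Z (n + 1) ω = ∑ i ∈ range (Z n ω), ξ (n, i) ω) (hx : ∀ᵐ ω ∂P, ∀ c, μ ≤ ξ c ω)
    (hξ : ∀ c, Measurable (ξ c)) (n : ℕ) :
    P.real {ω | Z (n + 1) ω = μ ^ (n + 1) + 1} = ∑ j ∈ range (μ ^ n), P.real
      {ω | ∀ c ∈ regularTreeNodes μ (n + 1), ξ c ω = update (fun _ => μ) (n, j) (μ + 1) c} := by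
  rw [← measureReal_biUnion_finset _ fun j _ => measurableSet_forall_mem_eq hξ _ _]
  · refine measureReal_congr ?_
    filter_upwards [hx] with ω hω
    refine propext ((eq_pow_succ_add_one_iff_forall_regularTreeNodes (z := (Z · ω)) hμ (hZ0 ω)
      (hZ · ω) hω n).trans ?_)
    change _ ↔ ω ∈ ⋃ j ∈ range (μ ^ n), _
    simp
  · intro j hj j' _ hne
    exact disjoint_setOf_forall_mem_eq (c := (n, j))
      (mem_regularTreeNodes.2 ⟨n.lt_succ_self, by simpa using hj⟩) (by simp [hne])

end GaltonWatson

theorem GW_minimal_path_plus_one_general {Ω : Type*} [MeasurableSpace Ω]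
    (P : Measure Ω) [IsProbabilityMeasure P]
    (p : ℕ → ℝ)
    (μ : ℕ) (hμ : 2 ≤ μ) (hp_below : ∀ j, j < μ → p j = 0) (hpμ : 0 < p μ)
    (ξ : ℕ × ℕ → Ω → ℕ) (hξ_meas : ∀ ni, Measurable (ξ ni))
    (hξ_indep : iIndepFun ξ P)
    (hξ_law : ∀ ni : ℕ × ℕ, ∀ j : ℕ, (P {ω | ξ ni ω = j}).toReal = p j)
    (Z : ℕ → Ω → ℕ) (hZ0 : ∀ ω, Z 0 ω = 1)
    (hZrec : ∀ n ω, Z (n + 1) ω = ∑ i ∈ Finset.range (Z n ω), ξ (n, i) ω) :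
    ∀ n : ℕ, 1 ≤ n →
      (P {ω | Z n ω = μ ^ n + 1}).toReal
        = (p μ)⁻¹ * p (μ + 1) * (μ : ℝ) ^ (n - 1) * (P {ω | Z n ω = μ ^ n}).toReal := by
  intro n hn
  obtain ⟨n, rfl⟩ : ∃ m, n = m + 1 := ⟨n - 1, by omega⟩
  have hlaw : ∀ c j, P.real {ω | ξ c ω = j} = p j := hξ_law
  have hx : ∀ᵐ ω ∂P, ∀ c, μ ≤ ξ c ω := ae_all_iff.2 fun c => ae_le_of_measure_eq_zero
    fun j hj => (measureReal_eq_zero_iff).1 ((hlaw c j).trans (hp_below j hj))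
  change P.real _ = _ * P.real _
  rw [measureReal_eq_pow_succ_add_one hμ hZ0 hZrec hx hξ_meas,
    measureReal_eq_pow (by omega) hZ0 hZrec hx]
  set T := regularTreeNodes μ (n + 1)
  have hE : ∀ j ∈ range (μ ^ n),
      ∏ c ∈ T, p (update (fun _ => μ) (n, j) (μ + 1) c) = p (μ + 1) * p μ ^ #T / p μ :=
    fun j hj => eq_div_of_mul_eq hpμ.ne' <|
      prod_update_const_mul (mem_regularTreeNodes.2 ⟨n.lt_succ_self, mem_range.1 hj⟩) p μ (μ + 1)
  simp only [hξ_indep.measureReal_forall_mem_eq, hlaw, sum_congr rfl hE, prod_const]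
  simp only [sum_const, card_range, nsmul_eq_mul, Nat.add_sub_cancel, Nat.cast_pow]
  ring

/-- Let `(Z_n)` be a Galton-Watson process with `Z_0 = 1` and offspring minimum `μ ≥ 2`
(i.e. `p_j = 0` for `j < μ` and `p_μ > 0`).  Then
`P(Z_n = μ^n + 1) = p_μ⁻¹ p_{μ+1} μ^{n-1} P(Z_n = μ^n)` for all `n ≥ 1`. -/
theorem GW_minimal_path_plus_one {Ω : Type*} [MeasurableSpace Ω]
    (P : Measure Ω) [IsProbabilityMeasure P]
    (p : ℕ → ℝ) (hp_nonneg : ∀ j, 0 ≤ p j) (hp_sum : ∑' j, p j = 1)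
    (μ : ℕ) (hμ : 2 ≤ μ) (hp_below : ∀ j, j < μ → p j = 0) (hpμ : 0 < p μ)
    (ξ : ℕ × ℕ → Ω → ℕ) (hξ_meas : ∀ ni, Measurable (ξ ni))
    (hξ_indep : iIndepFun ξ P)
    (hξ_law : ∀ ni : ℕ × ℕ, ∀ j : ℕ, (P {ω | ξ ni ω = j}).toReal = p j)
    (Z : ℕ → Ω → ℕ) (hZ0 : ∀ ω, Z 0 ω = 1)
    (hZrec : ∀ n ω, Z (n + 1) ω = ∑ i ∈ Finset.range (Z n ω), ξ (n, i) ω) :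
    ∀ n : ℕ, 1 ≤ n →
      (P {ω | Z n ω = μ ^ n + 1}).toReal
        = (p μ)⁻¹ * p (μ + 1) * (μ : ℝ) ^ (n - 1) * (P {ω | Z n ω = μ ^ n}).toReal :=
  GW_minimal_path_plus_one_general P p μ hμ hp_below hpμ ξ hξ_meas hξ_indep hξ_law Z hZ0 hZrec
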